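/- Let y*, z* ∈ ℝ^m and τ, λ > 0 satisfy: y*_i = 0 whenever z*_i ≠ 0; z*_i ≥ 0 for all i; y*_i > √(2τλ) whenever y*_i > 0; and τz*_i < √(2τλ) whenever z*_i > 0. Then for each coordinate i, y*_i is a minimizer of t ↦ (1/(2τ))(t − (y*_i + τz*_i))² + λ·ℓ(t), where ℓ(t)=1 for t>0 and 0 otherwise, i.e., y* ∈ Prox_{τλ‖(·)₊‖₀}(y* + τz*). -/

import Mathlib

/-- Heaviside / 0-1 loss: 1 for positive arguments, 0 otherwise. -/
noncomputable def heaviside (t : ℝ) : ℝ := if 0 < t then 1 else 0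

/-
Coordinatewise the prox is the hard-thresholding of `w = y* + τ z*` at `√(2τλ)`: a positive
coordinate pays the penalty `λ` but no quadratic cost, a nonpositive one pays `(t - w)² / (2τ)` and
no penalty. So `t = w` is optimal when `w ≤ 0` or `w > √(2τλ)`, and `t = 0` is optimal when
`0 ≤ w ≤ √(2τλ)`. The hypotheses put every coordinate in one of these regimes: either `z*_i = 0`
and `w = y*_i`, or `z*_i > 0`, `y*_i = 0` and `0 < w = τ z*_i < √(2τλ)`.
-/

lemma heaviside_nonneg (t : ℝ) : 0 ≤ heaviside t := by
  unfold heaviside; split_ifs <;> norm_num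

lemma heaviside_of_pos {t : ℝ} (ht : 0 < t) : heaviside t = 1 := if_pos ht

lemma heaviside_of_nonpos {t : ℝ} (ht : t ≤ 0) : heaviside t = 0 := if_neg ht.not_gt

/-- Its minimizers in `t` form the coordinate of `Prox_{τλ‖(·)₊‖₀}(w)`. -/
noncomputable def heavisideProxObjective (τ lam w t : ℝ) : ℝ :=
  1 / (2 * τ) * (t - w) ^ 2 + lam * heaviside t

section

variable {τ lam w : ℝ}

lemma heavisideProxObjective_self_of_nonpos (hw : w ≤ 0) :
    heavisideProxObjective τ lam w w = 0 := by
  simp [heavisideProxObjective, heaviside_of_nonpos hw]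

lemma heavisideProxObjective_nonneg (hτ : 0 ≤ τ) (hlam : 0 ≤ lam) (t : ℝ) :
    0 ≤ heavisideProxObjective τ lam w t := by
  unfold heavisideProxObjective
  have := heaviside_nonneg t
  positivity

lemma lam_le_heavisideProxObjective_of_pos (hτ : 0 ≤ τ) {t : ℝ} (ht : 0 < t) :
    lam ≤ heavisideProxObjective τ lam w t := by
  unfold heavisideProxObjective
  rw [heaviside_of_pos ht, mul_one]
  have : 0 ≤ 1 / (2 * τ) * (t - w) ^ 2 := by positivity
  linarith

lemma heavisideProxObjective_zero_le_of_nonpos (hτ : 0 ≤ τ) (hw : 0 ≤ w) {t : ℝ} (ht : t ≤ 0) :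
    heavisideProxObjective τ lam w 0 ≤ heavisideProxObjective τ lam w t := by
  unfold heavisideProxObjective
  rw [heaviside_of_nonpos le_rfl, heaviside_of_nonpos ht, mul_zero, add_zero, add_zero]
  exact mul_le_mul_of_nonneg_left (by nlinarith) (by positivity)

lemma heavisideProxObjective_zero :
    heavisideProxObjective τ lam w 0 = w ^ 2 / (2 * τ) := by
  rw [heavisideProxObjective, heaviside_of_nonpos le_rfl]
  ring

lemma isMinimizer_self_of_nonpos (hτ : 0 ≤ τ) (hlam : 0 ≤ lam) (hw : w ≤ 0) (t : ℝ) :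
    heavisideProxObjective τ lam w w ≤ heavisideProxObjective τ lam w t := by
  rw [heavisideProxObjective_self_of_nonpos hw]
  exact heavisideProxObjective_nonneg hτ hlam t

lemma isMinimizer_self_of_sqrt_lt (hτ : 0 < τ) (hw : √(2 * τ * lam) < w) (t : ℝ) :
    heavisideProxObjective τ lam w w ≤ heavisideProxObjective τ lam w t := by
  have hw0 : 0 < w := (Real.sqrt_nonneg _).trans_lt hw
  have hw2 : 2 * τ * lam ≤ w ^ 2 := (Real.sqrt_le_iff.mp hw.le).2
  have hself : heavisideProxObjective τ lam w w = lam := by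
    simp [heavisideProxObjective, heaviside_of_pos hw0]
  rw [hself]
  rcases lt_or_ge 0 t with ht | ht
  · exact lam_le_heavisideProxObjective_of_pos hτ.le ht
  · calc lam ≤ w ^ 2 / (2 * τ) := by rw [le_div_iff₀ (by positivity)]; linarith
      _ = heavisideProxObjective τ lam w 0 := heavisideProxObjective_zero.symm
      _ ≤ heavisideProxObjective τ lam w t :=
        heavisideProxObjective_zero_le_of_nonpos hτ.le hw0.le ht

lemma isMinimizer_zero_of_le_sqrt (hτ : 0 < τ) (hlam : 0 ≤ lam) (hw0 : 0 ≤ w)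
    (hw : w ≤ √(2 * τ * lam)) (t : ℝ) :
    heavisideProxObjective τ lam w 0 ≤ heavisideProxObjective τ lam w t := by
  rcases lt_or_ge 0 t with ht | ht
  · have hw2 : w ^ 2 ≤ 2 * τ * lam := (Real.le_sqrt hw0 (by positivity)).mp hw
    calc heavisideProxObjective τ lam w 0 = w ^ 2 / (2 * τ) := heavisideProxObjective_zero
      _ ≤ lam := by rw [div_le_iff₀ (by positivity)]; linarith
      _ ≤ heavisideProxObjective τ lam w t := lam_le_heavisideProxObjective_of_pos hτ.le ht
  · exact heavisideProxObjective_zero_le_of_nonpos hτ.le hw0 ht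

end

theorem stmt_9 (m : ℕ) (τ lam : ℝ) (hτ : 0 < τ) (hlam : 0 < lam)
    (ystar zstar : Fin m → ℝ)
    (h1 : ∀ i, zstar i ≠ 0 → ystar i = 0)
    (h2 : ∀ i, 0 ≤ zstar i)
    (h3 : ∀ i, 0 < ystar i → Real.sqrt (2 * τ * lam) < ystar i)
    (h4 : ∀ i, 0 < zstar i → τ * zstar i < Real.sqrt (2 * τ * lam)) :
    ∀ i, ∀ t : ℝ,
      (1 / (2 * τ)) * (ystar i - (ystar i + τ * zstar i))^2 + lam * heaviside (ystar i)
        ≤ (1 / (2 * τ)) * (t - (ystar i + τ * zstar i))^2 + lam * heaviside t := by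
  intro i t
  change heavisideProxObjective τ lam (ystar i + τ * zstar i) (ystar i)
    ≤ heavisideProxObjective τ lam (ystar i + τ * zstar i) t
  rcases (h2 i).eq_or_lt with hz | hz
  · rw [← hz, mul_zero, add_zero]
    rcases le_or_gt (ystar i) 0 with hy | hy
    · exact isMinimizer_self_of_nonpos hτ.le hlam.le hy t
    · exact isMinimizer_self_of_sqrt_lt hτ (h3 i hy) t
  · rw [h1 i hz.ne', zero_add]
    exact isMinimizer_zero_of_le_sqrt hτ hlam.le (by positivity) (h4 i hz).le t
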